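/- The sum over all subsets S of {1,...,n} of det(X_Sᵀ X_S + A) · ∏_{i∈S} p_i · ∏_{i∉S} (1−p_i) equals det(∑_i p_i x_i x_iᵀ + A); hence the regularized DPP probabilities sum to one. -/

import Mathlib

/-!
Along the line `t ↦ M + t • u vᵀ` the determinant is affine, since after bordering `M` by `-u` and
`t • vᵀ` the parameter `t` occurs only in one row. Hence averaging over whether the rank-one term
`x a x aᵀ` is present (with weights `p a` and `1 - p a`) yields the determinant at its mean
`p a • x a x aᵀ`, and induction over the index set does this for every `a` in turn.
-/

open Matrix Finset

section

variable {n R : Type*} [Fintype n] [DecidableEq n] [CommRing R]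

theorem Matrix.det_add_smul_vecMulVec_eq_add_mul (M : Matrix n n R) (u v : n → R) (t : R) :
    (M + t • vecMulVec u v).det =
      M.det + t * (fromBlocks M (-replicateCol Unit u) (replicateRow Unit v) 0).det := by
  set B := fromBlocks M (-replicateCol Unit u) (replicateRow Unit v) 0
  have hB : fromBlocks M (-replicateCol Unit u) (t • replicateRow Unit v) 1 =
      B.updateRow (Sum.inr ()) (t • B (Sum.inr ()) + Pi.single (Sum.inr ()) 1) := by
    ext (i | i) (j | j) <;> simp [B, updateRow_apply]
  have hlast : B.updateRow (Sum.inr ()) (Pi.single (Sum.inr ()) 1) =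
      fromBlocks M (-replicateCol Unit u) 0 1 := by
    ext (i | i) (j | j) <;> simp [B, updateRow_apply]
  calc (M + t • vecMulVec u v).det
      = (fromBlocks M (-replicateCol Unit u) (t • replicateRow Unit v) 1).det := by
        rw [det_fromBlocks_one₂₂, vecMulVec_eq Unit, Matrix.mul_smul, Matrix.neg_mul, smul_neg,
          sub_neg_eq_add]
    _ = M.det + t * B.det := by
        rw [hB, det_updateRow_add, det_updateRow_smul, updateRow_eq_self, hlast,
          det_fromBlocks_zero₂₁, det_one, mul_one, add_comm]

theorem Matrix.det_add_smul_vecMulVec (M : Matrix n n R) (u v : n → R) (t : R) :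
    (M + t • vecMulVec u v).det = (1 - t) * M.det + t * (M + vecMulVec u v).det := by
  have h1 := det_add_smul_vecMulVec_eq_add_mul M u v 1
  rw [one_smul] at h1
  rw [det_add_smul_vecMulVec_eq_add_mul, h1]
  ring

theorem Finset.sum_powerset_det_add_sum_vecMulVec_mul {ι : Type*} [DecidableEq ι]
    (u v : ι → n → R) (p : ι → R) (T : Finset ι) (A : Matrix n n R) :
    ∑ S ∈ T.powerset, ((∑ i ∈ S, vecMulVec (u i) (v i)) + A).det *
        ((∏ i ∈ S, p i) * ∏ i ∈ T \ S, (1 - p i)) =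
      (∑ i ∈ T, p i • vecMulVec (u i) (v i) + A).det := by
  induction T using Finset.induction_on generalizing A with
  | empty => simp
  | @insert a T ha ih =>
    have notMem {S : Finset ι} (hST : S ∈ T.powerset) : a ∉ S := fun h ↦ ha (mem_powerset.mp hST h)
    have without_a : ∑ S ∈ T.powerset, ((∑ i ∈ S, vecMulVec (u i) (v i)) + A).det *
          ((∏ i ∈ S, p i) * ∏ i ∈ insert a T \ S, (1 - p i)) =
        (1 - p a) * (∑ i ∈ T, p i • vecMulVec (u i) (v i) + A).det := by
      rw [← ih, mul_sum]
      refine sum_congr rfl fun S hST ↦ ?_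
      rw [insert_sdiff_of_notMem _ (notMem hST), prod_insert fun h ↦ ha (mem_sdiff.mp h).1]
      ring
    have with_a : ∑ S ∈ T.powerset, ((∑ i ∈ insert a S, vecMulVec (u i) (v i)) + A).det *
          ((∏ i ∈ insert a S, p i) * ∏ i ∈ insert a T \ insert a S, (1 - p i)) =
        p a * (∑ i ∈ T, p i • vecMulVec (u i) (v i) + (A + vecMulVec (u a) (v a))).det := by
      rw [← ih, mul_sum]
      refine sum_congr rfl fun S hST ↦ ?_
      rw [insert_sdiff_insert, sdiff_insert_of_notMem ha, sum_insert (notMem hST),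
        prod_insert (notMem hST), add_comm (vecMulVec _ _), add_assoc, add_comm (vecMulVec _ _)]
      ring
    rw [sum_powerset_insert ha, without_a, with_a, sum_insert ha, add_comm (p a • _),
      add_right_comm, det_add_smul_vecMulVec, add_assoc]

end

theorem regularized_dpp_normalization_general
    (n d : ℕ) (x : Fin n → (Fin d → ℝ)) (p : Fin n → ℝ)
    (A : Matrix (Fin d) (Fin d) ℝ) :
    ∑ S : Finset (Fin n),
        ((∑ i ∈ S, vecMulVec (x i) (x i)) + A).det *
          ((∏ i ∈ S, p i) * ∏ i ∈ Sᶜ, (1 - p i))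
      = (∑ i, p i • vecMulVec (x i) (x i) + A).det := by
  simpa only [powerset_univ, compl_eq_univ_sdiff] using
    sum_powerset_det_add_sum_vecMulVec_mul x x p univ A

/-- The regularized DPP probabilities sum to one: the sum over all subsets `S`
of `det (X_Sᵀ X_S + A) ∏_{i∈S} p i ∏_{i∉S} (1 - p i)` equals
`det (∑ i, p i • x i x iᵀ + A)`, where `X_Sᵀ X_S = ∑_{i∈S} x i x iᵀ`. -/
theorem regularized_dpp_normalization
    (n d : ℕ) (x : Fin n → (Fin d → ℝ)) (p : Fin n → ℝ)
    (hp : ∀ i, p i ∈ Set.Icc (0 : ℝ) 1)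
    (A : Matrix (Fin d) (Fin d) ℝ) (hA : A.PosSemidef) :
    ∑ S : Finset (Fin n),
        ((∑ i ∈ S, vecMulVec (x i) (x i)) + A).det *
          ((∏ i ∈ S, p i) * ∏ i ∈ Sᶜ, (1 - p i))
      = (∑ i, p i • vecMulVec (x i) (x i) + A).det :=
  regularized_dpp_normalization_general n d x p A
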